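/- An infinite word t over the two-letter alphabet {a, b} is non-recurrent with all of its factors balanced if and only if t is balanced and ultimately periodic but not periodic (i.e., t is a skew word). -/

import Mathlib

/-- The prefix of length `k` of an infinite word `t`. -/
def prefixList {A : Type*} (t : ℕ → A) (k : ℕ) : List A := (List.range k).map t

/-- `u` occurs as a factor of the infinite word `t` at position `i`. -/
def FactorAt {A : Type*} (t : ℕ → A) (u : List A) (i : ℕ) : Prop :=
  u = (List.range u.length).map (fun j => t (i + j))

/-- `u` is a (finite) factor of the infinite word `t`. -/
def IsFactorInf {A : Type*} (t : ℕ → A) (u : List A) : Prop := ∃ i, FactorAt t u i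

/-- An infinite word is recurrent if each of its factors occurs infinitely often. -/
def Recurrent {A : Type*} (t : ℕ → A) : Prop :=
  ∀ u, IsFactorInf t u → ∀ N, ∃ i, N ≤ i ∧ FactorAt t u i

/-- `u` is a right special factor of `t`. -/
def RightSpecial {A : Type*} (t : ℕ → A) (u : List A) : Prop :=
  ∃ a b : A, a ≠ b ∧ IsFactorInf t (u ++ [a]) ∧ IsFactorInf t (u ++ [b])

/-- `u` is a left special factor of `t`. -/
def LeftSpecial {A : Type*} (t : ℕ → A) (u : List A) : Prop :=
  ∃ a b : A, a ≠ b ∧ IsFactorInf t (a :: u) ∧ IsFactorInf t (b :: u)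

/-- An infinite word is episturmian if its set of factors is closed under reversal
and it has at most one right special factor of each length. -/
def Episturmian {A : Type*} (t : ℕ → A) : Prop :=
  (∀ u, IsFactorInf t u → IsFactorInf t u.reverse) ∧
  (∀ u v, RightSpecial t u → RightSpecial t v → u.length = v.length → u = v)

/-- A standard episturmian word: episturmian with all left special factors prefixes. -/
def StdEpisturmian {A : Type*} (t : ℕ → A) : Prop :=
  Episturmian t ∧ ∀ u, LeftSpecial t u → u = prefixList t u.length

/-- A finite word is finite episturmian if it is a factor of some episturmian infinite word. -/
def FiniteEpisturmian {A : Type*} (w : List A) : Prop :=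
  ∃ t : ℕ → A, Episturmian t ∧ IsFactorInf t w

/-- An acceptable pair: a strict total order `r` on `A` together with a letter `a`
that is minimal for `r`. -/
def AcceptablePair {A : Type*} (r : A → A → Prop) (a : A) : Prop :=
  IsStrictTotalOrder A r ∧ ∀ b, b ≠ a → r a b

/-- Non-strict lexicographic order on finite words induced by the order `r` on letters. -/
def listLe {A : Type*} (r : A → A → Prop) (u v : List A) : Prop := u = v ∨ List.Lex r u v

/-- Non-strict lexicographic order on infinite words induced by the order `r` on letters. -/
def infLe {A : Type*} (r : A → A → Prop) (x y : ℕ → A) : Prop :=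
  x = y ∨ ∃ i, (∀ j, j < i → x j = y j) ∧ r (x i) (y i)

/-- `m` is the lexicographically smallest factor of the finite word `w` of length `k`. -/
def IsMinFacLen {A : Type*} (r : A → A → Prop) (w : List A) (k : ℕ) (m : List A) : Prop :=
  m <:+: w ∧ m.length = k ∧ ∀ u, u <:+: w → u.length = k → listLe r m u

/-- `m` is the lexicographically greatest factor of the finite word `w` of length `k`. -/
def IsMaxFacLen {A : Type*} (r : A → A → Prop) (w : List A) (k : ℕ) (m : List A) : Prop :=
  m <:+: w ∧ m.length = k ∧ ∀ u, u <:+: w → u.length = k → listLe r u m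

/-- `m = min(w)`: for each `j ≤ |m|` the prefix of `m` of length `j` is `min(w|j)`,
and `|m|` is maximal with this chain property. -/
def IsMinFin {A : Type*} (r : A → A → Prop) (w m : List A) : Prop :=
  m ≠ [] ∧
  (∀ j, j ≤ m.length → IsMinFacLen r w j (m.take j)) ∧
  (∀ m', IsMinFacLen r w (m.length + 1) m' → ¬ m <+: m')

/-- `m = max(w)` (finite word version). -/
def IsMaxFin {A : Type*} (r : A → A → Prop) (w m : List A) : Prop :=
  m ≠ [] ∧
  (∀ j, j ≤ m.length → IsMaxFacLen r w j (m.take j)) ∧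
  (∀ m', IsMaxFacLen r w (m.length + 1) m' → ¬ m <+: m')

/-- `m = min(t)` for an infinite word `t`: each prefix of `m` is the lexicographically
smallest factor of `t` of its length. -/
def IsMinInf {A : Type*} (r : A → A → Prop) (t m : ℕ → A) : Prop :=
  ∀ k, IsFactorInf t (prefixList m k) ∧
    ∀ u, IsFactorInf t u → u.length = k → listLe r (prefixList m k) u

/-- `m = max(t)` for an infinite word `t`. -/
def IsMaxInf {A : Type*} (r : A → A → Prop) (t m : ℕ → A) : Prop :=
  ∀ k, IsFactorInf t (prefixList m k) ∧
    ∀ u, IsFactorInf t u → u.length = k → listLe r u (prefixList m k)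

/-- Prepend a letter to an infinite word. -/
def consInf {A : Type*} (a : A) (t : ℕ → A) : ℕ → A
  | 0 => a
  | n + 1 => t n

/-- Prepend a finite word to an infinite word. -/
def wordAppend {A : Type*} (v : List A) (t : ℕ → A) : ℕ → A :=
  fun n => if h : n < v.length then v.get ⟨n, h⟩ else t (n - v.length)

/-- The pure epistandard morphism `ψ_z` on finite words: it fixes `z` and sends
each letter `x ≠ z` to `zx`. -/
def psiW {A : Type*} [DecidableEq A] (z : A) (w : List A) : List A :=
  (w.map (fun x => if x = z then [z] else [z, x])).flatten

/-- The finite word `u` is a prefix of the infinite word `t`. -/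
def IsPrefixInf {A : Type*} (u : List A) (t : ℕ → A) : Prop := u = prefixList t u.length

/-- `y = f(t)`: the infinite word `y` is the image of the infinite word `t` under the
(non-erasing) morphism `f`, acting letter by letter. -/
def IsMorphImage {A : Type*} (f : List A → List A) (t y : ℕ → A) : Prop :=
  ∀ k, IsPrefixInf (f (prefixList t k)) y

/-- Pure epistandard morphisms: finite compositions of the morphisms `ψ_a`. -/
inductive PureEpistandard {A : Type*} [DecidableEq A] : (List A → List A) → Prop
  | id : PureEpistandard _root_.id
  | comp (a : A) (f : List A → List A) : PureEpistandard f →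
      PureEpistandard (fun w => psiW a (f w))

/-- An infinite word is episkew if it is non-recurrent and all of its factors
are finite episturmian. -/
def Episkew {A : Type*} (t : ℕ → A) : Prop :=
  ¬ Recurrent t ∧ ∀ u, IsFactorInf t u → FiniteEpisturmian u

/- Two-letter (Bool) notions: `false` plays the role of `a`, `true` of `b`,
with the order `false < true`. -/

/-- A finite binary word is balanced. -/
def BalancedList (w : List Bool) : Prop :=
  ∀ u v : List Bool, u <:+: w → v <:+: w → u.length = v.length →
    |(u.count true : ℤ) - (v.count true : ℤ)| ≤ 1

/-- An infinite binary word is balanced. -/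
def BalancedInf (t : ℕ → Bool) : Prop :=
  ∀ u v : List Bool, IsFactorInf t u → IsFactorInf t v → u.length = v.length →
    |(u.count true : ℤ) - (v.count true : ℤ)| ≤ 1

/-- The Sturmian word of slope `α` and intercept `ρ` defined via floors. -/
def SturmianFloor (α ρ : ℝ) (t : ℕ → Bool) : Prop :=
  ∀ n : ℕ, t n = true ↔ ⌊((n : ℝ) + 1) * α + ρ⌋ ≠ ⌊(n : ℝ) * α + ρ⌋

/-- The Sturmian word of slope `α` and intercept `ρ` defined via ceilings. -/
def SturmianCeil (α ρ : ℝ) (t : ℕ → Bool) : Prop :=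
  ∀ n : ℕ, t n = true ↔ ⌈((n : ℝ) + 1) * α + ρ⌉ ≠ ⌈(n : ℝ) * α + ρ⌉

/-- Aperiodic Sturmian words: those of irrational slope. -/
def IsAperiodicSturmian (t : ℕ → Bool) : Prop :=
  ∃ α ρ : ℝ, α ∈ Set.Icc (0 : ℝ) 1 ∧ ρ ∈ Set.Icc (0 : ℝ) 1 ∧ Irrational α ∧
    (SturmianFloor α ρ t ∨ SturmianCeil α ρ t)

/-- Standard Sturmian words: those with `ρ = α`. -/
def IsStandardSturmian (t : ℕ → Bool) : Prop :=
  ∃ α : ℝ, α ∈ Set.Icc (0 : ℝ) 1 ∧ (SturmianFloor α α t ∨ SturmianCeil α α t)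

/-- A fine infinite binary word: `(min(t), max(t)) = (a·s, b·s)` for some infinite word `s`. -/
def FineBool (t : ℕ → Bool) : Prop :=
  ∃ s : ℕ → Bool, IsMinInf (· < ·) t (consInf false s) ∧ IsMaxInf (· < ·) t (consInf true s)

/-- A periodic infinite word. -/
def PeriodicInf {A : Type*} (t : ℕ → A) : Prop := ∃ p, 0 < p ∧ ∀ i, t (i + p) = t i

/-- An ultimately periodic infinite word. -/
def UltPeriodicInf {A : Type*} (t : ℕ → A) : Prop :=
  ∃ p, 0 < p ∧ ∃ m, ∀ i, m ≤ i → t (i + p) = t i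


/-! A balanced binary word has at most one right special factor of each length, hence at most
`n + 1` factors of length `n`. If `t` is not recurrent, some factor `u` of length `n` never occurs
after a position `N`, so the suffix of `t` from `N` on has at most `n` factors of length `n`; by the
Morse–Hedlund argument (some length admits no right special factor, and then each factor of that
length determines the next letter) that suffix, hence `t`, is ultimately periodic. Conversely an
ultimately periodic recurrent word is periodic, since a long prefix reoccurs in the periodic part. -/

section Factors

variable {A : Type*} {t : ℕ → A}

def infFactor (t : ℕ → A) (i n : ℕ) : List A := (List.range n).map (fun j => t (i + j))

def factorsOfLength (t : ℕ → A) (n : ℕ) : Set (List A) := {u | IsFactorInf t u ∧ u.length = n}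

@[simp] lemma length_infFactor (t : ℕ → A) (i n : ℕ) : (infFactor t i n).length = n := by
  simp [infFactor]

lemma factorAt_iff_eq_infFactor {u : List A} {i : ℕ} :
    FactorAt t u i ↔ u = infFactor t i u.length := Iff.rfl

lemma factorAt_infFactor (t : ℕ → A) (i n : ℕ) : FactorAt t (infFactor t i n) i := by
  rw [factorAt_iff_eq_infFactor, length_infFactor]

lemma infFactor_add (t : ℕ → A) (i m n : ℕ) :
    infFactor t i (m + n) = infFactor t i m ++ infFactor t (i + m) n := by
  simp [infFactor, List.range_add, Nat.add_assoc]

lemma infFactor_succ (t : ℕ → A) (i n : ℕ) :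
    infFactor t i (n + 1) = infFactor t i n ++ [t (i + n)] := by
  simp [infFactor, List.range_succ]

lemma infFactor_succ_eq_cons (t : ℕ → A) (i n : ℕ) :
    infFactor t i (n + 1) = t i :: infFactor t (i + 1) n := by
  simp [infFactor, List.range_succ_eq_map, Nat.add_assoc, Nat.add_comm 1]

@[simp] lemma infFactor_shift (t : ℕ → A) (N i n : ℕ) :
    infFactor (fun m => t (N + m)) i n = infFactor t (N + i) n := by
  simp [infFactor, Nat.add_assoc]

lemma mem_factorsOfLength {u : List A} {n : ℕ} :
    u ∈ factorsOfLength t n ↔ ∃ i, infFactor t i n = u := by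
  constructor
  · rintro ⟨⟨i, hi⟩, rfl⟩
    exact ⟨i, hi.symm⟩
  · rintro ⟨i, rfl⟩
    exact ⟨⟨i, factorAt_infFactor t i n⟩, length_infFactor t i n⟩

lemma IsFactorInf.of_infix {u v : List A} (hv : IsFactorInf t v) (h : u <:+: v) :
    IsFactorInf t u := by
  obtain ⟨x, y, rfl⟩ := h
  obtain ⟨i, hi⟩ := hv
  rw [factorAt_iff_eq_infFactor, List.length_append, List.length_append, infFactor_add,
    infFactor_add] at hi
  exact ⟨i + x.length, (List.append_inj (List.append_inj hi (by simp)).1 (by simp)).2⟩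

lemma FactorAt.infix_infFactor_zero {u : List A} {i m : ℕ} (h : FactorAt t u i)
    (hm : i + u.length ≤ m) : u <:+: infFactor t 0 m := by
  obtain ⟨k, rfl⟩ := Nat.exists_eq_add_of_le hm
  rw [infFactor_add, infFactor_add, Nat.zero_add, ← factorAt_iff_eq_infFactor.mp h]
  exact ⟨_, _, rfl⟩

lemma IsFactorInf.of_shift {u : List A} (N : ℕ) (h : IsFactorInf (fun m => t (N + m)) u) :
    IsFactorInf t u := by
  obtain ⟨i, hi⟩ := h
  rw [factorAt_iff_eq_infFactor, infFactor_shift] at hi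
  exact ⟨N + i, hi⟩

lemma finite_factorsOfLength [Finite A] (t : ℕ → A) (n : ℕ) : (factorsOfLength t n).Finite :=
  (List.finite_length_eq A n).subset fun _ hu => hu.2

end Factors

section MorseHedlund

variable {A : Type*} {t : ℕ → A}

lemma UltPeriodicInf.of_shift (N : ℕ) (h : UltPeriodicInf fun m => t (N + m)) :
    UltPeriodicInf t := by
  obtain ⟨p, hp, m, hm⟩ := h
  refine ⟨p, hp, N + m, fun i hi => ?_⟩
  obtain ⟨k, rfl⟩ := Nat.exists_eq_add_of_le (le_trans (Nat.le_add_right N m) hi)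
  simpa [Nat.add_assoc] using hm (i := k) (by omega)

lemma ultPeriodicInf_of_forall_add_eq {i j : ℕ} (hij : i < j) (h : ∀ d, t (i + d) = t (j + d)) :
    UltPeriodicInf t := by
  refine ⟨j - i, by omega, i, fun m hm => ?_⟩
  obtain ⟨d, rfl⟩ := Nat.exists_eq_add_of_le hm
  rw [h d, show i + d + (j - i) = j + d by omega]

lemma ultPeriodicInf_of_forall_not_rightSpecial [Finite A] (k : ℕ)
    (h : ∀ r : List A, r.length = k → ¬ RightSpecial t r) : UltPeriodicInf t := by
  have next_eq : ∀ i j, infFactor t i k = infFactor t j k → t (i + k) = t (j + k) := by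
    intro i j hij
    by_contra hne
    refine h _ (length_infFactor t i k) ⟨_, _, hne, ⟨i, ?_⟩, ⟨j, ?_⟩⟩
    · rw [factorAt_iff_eq_infFactor, List.length_append, length_infFactor, List.length_singleton,
        infFactor_succ]
    · rw [factorAt_iff_eq_infFactor, List.length_append, length_infFactor, List.length_singleton,
        infFactor_succ, hij]
  obtain ⟨i, j, hij, hwin⟩ := (finite_factorsOfLength t k).exists_lt_map_eq_of_forall_mem
    (f := fun i => infFactor t i k) fun i => mem_factorsOfLength.mpr ⟨i, rfl⟩
  -- each window of length `k` determines the next one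
  have hwindows : ∀ d, infFactor t (i + d) k = infFactor t (j + d) k := by
    intro d
    induction d with
    | zero => exact hwin
    | succ d ih =>
      have := congrArg List.tail
        (by rw [infFactor_succ, infFactor_succ, ih, next_eq _ _ ih] :
          infFactor t (i + d) (k + 1) = infFactor t (j + d) (k + 1))
      simpa [infFactor_succ_eq_cons, Nat.add_assoc] using this
  exact ultPeriodicInf_of_forall_add_eq (i := i + k) (j := j + k) (by omega) fun d => by
    rw [Nat.add_right_comm i, Nat.add_right_comm j]
    exact next_eq _ _ (hwindows d)

lemma ncard_factorsOfLength_lt_of_rightSpecial [Finite A] {r : List A}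
    (hr : RightSpecial t r) :
    (factorsOfLength t r.length).ncard < (factorsOfLength t (r.length + 1)).ncard := by
  obtain ⟨a, b, hab, ha, hb⟩ := hr
  have hb_mem : r ++ [b] ∈ factorsOfLength t (r.length + 1) := ⟨hb, by simp⟩
  have hsub : factorsOfLength t r.length ⊆
      List.dropLast '' (factorsOfLength t (r.length + 1) \ {r ++ [b]}) := by
    rintro v ⟨⟨i, hi⟩, hv⟩
    rw [factorAt_iff_eq_infFactor, hv] at hi
    by_cases hx : infFactor t i (r.length + 1) = r ++ [b]
    · refine ⟨r ++ [a], ⟨⟨ha, by simp⟩, by simpa using hab⟩, ?_⟩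
      rw [infFactor_succ] at hx
      rw [List.dropLast_concat, hi, List.append_inj_left' hx rfl]
    · refine ⟨infFactor t i (r.length + 1), ⟨mem_factorsOfLength.mpr ⟨i, rfl⟩, hx⟩, ?_⟩
      rw [infFactor_succ, List.dropLast_concat, hi]
  have hfin := finite_factorsOfLength t (r.length + 1)
  calc (factorsOfLength t r.length).ncard
      ≤ (List.dropLast '' (factorsOfLength t (r.length + 1) \ {r ++ [b]})).ncard :=
        Set.ncard_le_ncard hsub (hfin.sdiff.image _)
    _ ≤ (factorsOfLength t (r.length + 1) \ {r ++ [b]}).ncard := Set.ncard_image_le hfin.sdiff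
    _ < (factorsOfLength t (r.length + 1)).ncard :=
        Set.ncard_sdiff_singleton_lt_of_mem hb_mem hfin

lemma le_ncard_factorsOfLength [Finite A] {n : ℕ}
    (h : ∀ k < n, ∃ r : List A, r.length = k ∧ RightSpecial t r) :
    n + 1 ≤ (factorsOfLength t n).ncard := by
  induction n with
  | zero =>
    have hne : (factorsOfLength t 0).Nonempty := ⟨[], mem_factorsOfLength.mpr ⟨0, rfl⟩⟩
    exact (Set.ncard_pos (finite_factorsOfLength t 0)).mpr hne
  | succ n ih =>
    obtain ⟨r, rfl, hr⟩ := h n (Nat.lt_succ_self n)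
    have := ih fun k hk => h k (Nat.lt_succ_of_lt hk)
    have := ncard_factorsOfLength_lt_of_rightSpecial hr
    omega

theorem ultPeriodicInf_of_ncard_factorsOfLength_le [Finite A] {n : ℕ}
    (h : (factorsOfLength t n).ncard ≤ n) : UltPeriodicInf t := by
  by_contra hU
  have : n + 1 ≤ (factorsOfLength t n).ncard := le_ncard_factorsOfLength fun k _ => by
    by_contra hk
    push Not at hk
    exact hU (ultPeriodicInf_of_forall_not_rightSpecial k hk)
  omega

end MorseHedlund

section Balanced

variable {t : ℕ → Bool}

lemma rightSpecial_iff_bool {u : List Bool} :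
    RightSpecial t u ↔ IsFactorInf t (u ++ [false]) ∧ IsFactorInf t (u ++ [true]) := by
  constructor
  · rintro ⟨(_ | _), (_ | _), hab, ha, hb⟩ <;> simp_all
  · rintro ⟨h0, h1⟩
    exact ⟨false, true, Bool.false_ne_true, h0, h1⟩

lemma BalancedInf.eq_of_rightSpecial (hB : BalancedInf t) {u v : List Bool}
    (hu : RightSpecial t u) (hv : RightSpecial t v) (hlen : u.length = v.length) : u = v := by
  induction u generalizing v with
  | nil => exact (List.length_eq_zero_iff.mp hlen.symm).symm
  | cons a u ih =>
    obtain _ | ⟨b, v⟩ := v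
    · simp at hlen
    rw [rightSpecial_iff_bool] at hu hv
    have tail (w : List Bool) (c d : Bool) (h : IsFactorInf t (c :: w ++ [d])) :
        IsFactorInf t (w ++ [d]) := h.of_infix (List.infix_cons (List.infix_refl _))
    obtain rfl : u = v := ih (rightSpecial_iff_bool.mpr ⟨tail _ _ _ hu.1, tail _ _ _ hu.2⟩)
      (rightSpecial_iff_bool.mpr ⟨tail _ _ _ hv.1, tail _ _ _ hv.2⟩) (by simpa using hlen)
    -- otherwise `t` contains both `0u0` and `1u1`, whose weights differ by two
    have hab := hB (a :: u ++ [a]) (b :: u ++ [b])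
      (by cases a; exacts [hu.1, hu.2]) (by cases b; exacts [hv.1, hv.2]) (by simp)
    cases a <;> cases b <;> simp [abs_le] at hab ⊢; omega

lemma ncard_factorsOfLength_succ_le (t : ℕ → Bool) (n : ℕ) :
    (factorsOfLength t (n + 1)).ncard ≤
      (factorsOfLength t n).ncard + {r | r.length = n ∧ RightSpecial t r}.ncard := by
  set E : Bool → Set (List Bool) := fun c => {v | IsFactorInf t (v ++ [c]) ∧ v.length = n}
  have hE (c : Bool) : (E c).Finite := (List.finite_length_eq Bool n).subset fun _ hv => hv.2
  have hcover : factorsOfLength t (n + 1) ⊆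
      (· ++ [false]) '' E false ∪ (· ++ [true]) '' E true := by
    intro w hw
    obtain ⟨i, rfl⟩ := mem_factorsOfLength.mp hw
    rw [infFactor_succ]
    have hmem : infFactor t i n ∈ E (t (i + n)) := by
      refine ⟨?_, length_infFactor t i n⟩
      rw [← infFactor_succ]
      exact (mem_factorsOfLength.mpr ⟨i, rfl⟩).1
    cases h : t (i + n) <;> rw [h] at hmem
    exacts [Or.inl ⟨_, hmem, rfl⟩, Or.inr ⟨_, hmem, rfl⟩]
  have hunion : E false ∪ E true ⊆ factorsOfLength t n := by
    rintro v (⟨hv, hlen⟩ | ⟨hv, hlen⟩) <;>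
      exact ⟨hv.of_infix (List.prefix_append _ _).isInfix, hlen⟩
  have hinter : E false ∩ E true = {r | r.length = n ∧ RightSpecial t r} := by
    ext r
    simp only [E, Set.mem_inter_iff, Set.mem_ofPred_eq, rightSpecial_iff_bool]
    tauto
  calc (factorsOfLength t (n + 1)).ncard
      ≤ ((· ++ [false]) '' E false ∪ (· ++ [true]) '' E true).ncard :=
        Set.ncard_le_ncard hcover (((hE false).image _).union ((hE true).image _))
    _ ≤ ((· ++ [false]) '' E false).ncard + ((· ++ [true]) '' E true).ncard :=
        Set.ncard_union_le _ _
    _ ≤ (E false).ncard + (E true).ncard :=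
        add_le_add (Set.ncard_image_le (hE false)) (Set.ncard_image_le (hE true))
    _ = (E false ∪ E true).ncard + (E false ∩ E true).ncard :=
        (Set.ncard_union_add_ncard_inter _ _ (hE false) (hE true)).symm
    _ ≤ (factorsOfLength t n).ncard + {r | r.length = n ∧ RightSpecial t r}.ncard := by
        rw [hinter]
        exact add_le_add_left (Set.ncard_le_ncard hunion (finite_factorsOfLength t n)) _

lemma BalancedInf.ncard_factorsOfLength_le (hB : BalancedInf t) (n : ℕ) :
    (factorsOfLength t n).ncard ≤ n + 1 := by
  induction n with
  | zero =>
    have hsub : factorsOfLength t 0 ⊆ {[]} := fun u hu => List.length_eq_zero_iff.mp hu.2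
    simpa using Set.ncard_le_ncard hsub
  | succ n ih =>
    have hRS : {r | r.length = n ∧ RightSpecial t r}.ncard ≤ 1 :=
      (Set.ncard_le_one_iff ((List.finite_length_eq Bool n).subset fun _ hr => hr.1)).mpr
        fun hr hs => hB.eq_of_rightSpecial hr.2 hs.2 (hr.1.trans hs.1.symm)
    have := ncard_factorsOfLength_succ_le t n
    omega

end Balanced

lemma balancedInf_iff_forall_balancedList (t : ℕ → Bool) :
    BalancedInf t ↔ ∀ u, IsFactorInf t u → BalancedList u := by
  constructor
  · intro hB w hw u v hu hv hlen
    exact hB u v (hw.of_infix hu) (hw.of_infix hv) hlen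
  · rintro hA u v ⟨i, hi⟩ ⟨j, hj⟩ hlen
    exact hA _ ⟨0, factorAt_infFactor t 0 _⟩ u v (hi.infix_infFactor_zero le_sup_left)
      (hj.infix_infFactor_zero le_sup_right) hlen

lemma PeriodicInf.recurrent {A : Type*} {t : ℕ → A} (h : PeriodicInf t) : Recurrent t := by
  obtain ⟨p, hp, hper⟩ := h
  rintro u ⟨i, hi⟩ N
  refine ⟨i + N * p, le_add_left (Nat.le_mul_of_pos_right N hp), ?_⟩
  rw [factorAt_iff_eq_infFactor] at hi ⊢
  rw [hi, length_infFactor]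
  have hNp : Function.Periodic t (N * p) := by simpa using Function.Periodic.nat_mul hper N
  exact List.map_congr_left fun j _ => by rw [Nat.add_right_comm, hNp]

lemma UltPeriodicInf.periodicInf_of_recurrent {A : Type*} {t : ℕ → A} (h : UltPeriodicInf t)
    (hR : Recurrent t) : PeriodicInf t := by
  obtain ⟨p, hp, m, hm⟩ := h
  refine ⟨p, hp, fun j => ?_⟩
  obtain ⟨i, hmi, hi⟩ := hR _ ⟨0, factorAt_infFactor t 0 (j + p + 1)⟩ m
  rw [factorAt_iff_eq_infFactor, length_infFactor] at hi
  have hcopy (x : ℕ) (hx : x < j + p + 1) : t x = t (i + x) := by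
    simpa [infFactor, hx] using congrArg (·[x]?) hi
  rw [hcopy j (by omega), hcopy (j + p) (by omega), ← Nat.add_assoc, hm _ (by omega)]

lemma BalancedInf.ultPeriodicInf_of_not_recurrent {t : ℕ → Bool} (hB : BalancedInf t)
    (hR : ¬ Recurrent t) : UltPeriodicInf t := by
  simp only [Recurrent, not_forall, not_exists, not_and] at hR
  obtain ⟨u, hu, N, hN⟩ := hR
  set s : ℕ → Bool := fun m => t (N + m)
  have hsub : factorsOfLength s u.length ⊆ factorsOfLength t u.length :=
    fun v hv => ⟨hv.1.of_shift N, hv.2⟩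
  have hssub : factorsOfLength s u.length ⊂ factorsOfLength t u.length := by
    refine (Set.ssubset_iff_of_subset hsub).mpr ⟨u, ⟨hu, rfl⟩, fun hus => ?_⟩
    obtain ⟨⟨i, hi⟩, -⟩ := hus
    rw [factorAt_iff_eq_infFactor, infFactor_shift] at hi
    exact hN (N + i) (Nat.le_add_right N i) hi
  have hlt := Set.ncard_lt_ncard hssub (finite_factorsOfLength t u.length)
  have hle := hB.ncard_factorsOfLength_le u.length
  exact UltPeriodicInf.of_shift N
    (ultPeriodicInf_of_ncard_factorsOfLength_le (t := s) (n := u.length) (by omega))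

/-- An infinite binary word `t` is non-recurrent with all of its factors
balanced iff `t` is balanced and ultimately periodic but not periodic (i.e., skew). -/
theorem skew_iff_nonrecurrent_balanced (t : ℕ → Bool) :
    (¬ Recurrent t ∧ ∀ u, IsFactorInf t u → BalancedList u) ↔
      (BalancedInf t ∧ UltPeriodicInf t ∧ ¬ PeriodicInf t) := by
  rw [← balancedInf_iff_forall_balancedList]
  constructor
  · rintro ⟨hR, hB⟩
    exact ⟨hB, hB.ultPeriodicInf_of_not_recurrent hR, fun hP => hR hP.recurrent⟩
  · rintro ⟨hB, hU, hP⟩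
    exact ⟨fun hR => hP (hU.periodicInf_of_recurrent hR), hB⟩
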